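/- arXiv:1608.02131 — 8 statements merged into one kernel-verified Lean document; each statement's English description precedes it below -/
import Mathlib

section
/- A finite oriented graph (V,E) is strongly connected if and only if its underlying unoriented graph is connected and there exists a flow Q: E → ℝ with Q(x,y) > 0 for every (x,y) ∈ E and div Q(x) = 0 for every vertex x. -/
/-!
If every vertex reaches every other, each edge `(a, b)` closes up with an oriented path
from `b` back to `a` into a nonnegative circulation carrying at least one unit on `(a, b)`;
the sum of these circulations over all edges is positive on every edge and divergence free.
Conversely, summing the divergence of a positive circulation over the set `S` of vertices
reachable from `x` leaves only the flux across the boundary of `S`. No edge leaves `S`, so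
no edge enters it either, i.e. every edge `y → x` can be reversed by an oriented path; hence
connectivity of the underlying unoriented graph gives strong connectivity.
-/

open Finset Relation

namespace OrientedGraph

variable {V : Type*} [Fintype V] (E : V → V → Prop) [DecidableRel E]

def divergence (Q : V → V → ℝ) (x : V) : ℝ :=
  ∑ y with E x y, Q x y - ∑ y with E y x, Q y x

lemma divergence_sum {ι : Type*} (s : Finset ι) (Q : ι → V → V → ℝ) (x : V) :
    divergence E (fun u v => ∑ i ∈ s, Q i u v) x = ∑ i ∈ s, divergence E (Q i) x := by
  simp only [divergence, sum_sub_distrib]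
  rw [sum_comm, sum_comm (s := univ.filter (E · x))]

lemma divergence_add (Q R : V → V → ℝ) (x : V) :
    divergence E (Q + R) x = divergence E Q x + divergence E R x := by
  simp only [divergence, Pi.add_apply, sum_add_distrib]
  ring

lemma divergence_edge [DecidableEq V] {a b : V} (hab : E a b) (x : V) :
    divergence E (fun u v => if u = a ∧ v = b then 1 else 0) x =
      (if x = a then 1 else 0) - (if x = b then 1 else 0) := by
  have hout : ∑ y with E x y, (if x = a ∧ y = b then (1 : ℝ) else 0) =
      if x = a then 1 else 0 := by
    by_cases hxa : x = a <;> simp [hxa, hab]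
  have hin : ∑ y with E y x, (if y = a ∧ x = b then (1 : ℝ) else 0) =
      if x = b then 1 else 0 := by
    by_cases hxb : x = b <;> simp [hxb, hab]
  rw [divergence, hout, hin]

variable {E}

lemma exists_nonneg_divergence_eq_of_reflTransGen [DecidableEq V] {a b : V}
    (h : ReflTransGen E a b) :
    ∃ P : V → V → ℝ, 0 ≤ P ∧
      ∀ x, divergence E P x = (if x = a then 1 else 0) - (if x = b then 1 else 0) := by
  induction h with
  | refl => exact ⟨0, le_rfl, fun x => by simp [divergence]⟩
  | @tail c d _ hcd ih =>
    obtain ⟨P, hP, hdivP⟩ := ih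
    refine ⟨P + fun u v => if u = c ∧ v = d then 1 else 0, ?_, fun x => ?_⟩
    · exact add_nonneg hP fun u v => by positivity
    · rw [divergence_add, hdivP, divergence_edge E hcd]
      ring

lemma exists_circulation_of_rel_of_reflTransGen {a b : V} (hab : E a b)
    (hba : ReflTransGen E b a) :
    ∃ C : V → V → ℝ, 0 ≤ C ∧ 1 ≤ C a b ∧ ∀ x, divergence E C x = 0 := by
  classical
  obtain ⟨P, hP, hdivP⟩ := exists_nonneg_divergence_eq_of_reflTransGen hba
  refine ⟨P + fun u v => if u = a ∧ v = b then 1 else 0, ?_, ?_, fun x => ?_⟩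
  · exact add_nonneg hP fun u v => by positivity
  · simpa using hP a b
  · rw [divergence_add, hdivP, divergence_edge E hab]
    ring

lemma exists_pos_circulation_of_forall_reflTransGen (h : ∀ x y, ReflTransGen E x y) :
    ∃ Q : V → V → ℝ, (∀ x y, E x y → 0 < Q x y) ∧ ∀ x, divergence E Q x = 0 := by
  have hC : ∀ p : V × V, ∃ C : V → V → ℝ,
      0 ≤ C ∧ (E p.1 p.2 → 1 ≤ C p.1 p.2) ∧ ∀ x, divergence E C x = 0 := by
    rintro ⟨a, b⟩
    by_cases hab : E a b
    · obtain ⟨C, hC, hCab, hdivC⟩ := exists_circulation_of_rel_of_reflTransGen hab (h b a)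
      exact ⟨C, hC, fun _ => hCab, hdivC⟩
    · exact ⟨0, le_rfl, fun h => absurd h hab, fun x => by simp [divergence]⟩
  choose C hC hCedge hdivC using hC
  refine ⟨fun u v => ∑ p, C p u v, fun a b hab => ?_, fun x => ?_⟩
  · calc (0 : ℝ) < 1 := one_pos
      _ ≤ C (a, b) a b := hCedge (a, b) hab
      _ ≤ ∑ p, C p a b := single_le_sum (fun p _ => hC p a b) (mem_univ _)
  · rw [divergence_sum]
    exact sum_eq_zero fun p _ => hdivC p x

lemma sum_divergence [DecidableEq V] (Q : V → V → ℝ) (S : Finset V) :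
    ∑ x ∈ S, divergence E Q x =
      ∑ x ∈ S, ∑ y ∈ Sᶜ with E x y, Q x y - ∑ x ∈ S, ∑ y ∈ Sᶜ with E y x, Q y x := by
  have hsplit (f : V → ℝ) : ∑ y, f y = ∑ y ∈ S, f y + ∑ y ∈ Sᶜ, f y :=
    (sum_add_sum_compl S f).symm
  have hinner : ∑ x ∈ S, ∑ y ∈ S, (if E x y then Q x y else 0) =
      ∑ x ∈ S, ∑ y ∈ S, (if E y x then Q y x else 0) := sum_comm
  simp only [divergence, sum_filter, hsplit, sum_sub_distrib, sum_add_distrib, hinner]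
  ring

lemma mem_of_rel_of_forall_rel_mem {Q : V → V → ℝ} (hQ : ∀ x y, E x y → 0 < Q x y)
    (hdivQ : ∀ x, divergence E Q x = 0) {S : Finset V} (hS : ∀ x ∈ S, ∀ y, E x y → y ∈ S)
    {x y : V} (hx : x ∈ S) (hyx : E y x) : y ∈ S := by
  classical
  by_contra hy
  have hout : ∑ u ∈ S, ∑ v ∈ Sᶜ with E u v, Q u v = 0 :=
    sum_eq_zero fun u hu => sum_eq_zero fun v hv => by
      simp only [mem_filter, mem_compl] at hv
      exact absurd (hS u hu v hv.2) hv.1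
  have hin : Q y x ≤ ∑ u ∈ S, ∑ v ∈ Sᶜ with E v u, Q v u :=
    calc Q y x ≤ ∑ v ∈ Sᶜ with E v x, Q v x :=
          single_le_sum (fun v hv => (hQ v x (mem_filter.1 hv).2).le)
            (mem_filter.2 ⟨mem_compl.2 hy, hyx⟩)
      _ ≤ ∑ u ∈ S, ∑ v ∈ Sᶜ with E v u, Q v u :=
          single_le_sum (f := fun u => ∑ v ∈ Sᶜ with E v u, Q v u)
            (fun u _ => sum_nonneg fun v hv => (hQ v u (mem_filter.1 hv).2).le) hx
  have hflux := sum_divergence (E := E) Q S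
  simp only [hdivQ, sum_const_zero, hout] at hflux
  linarith [hQ y x hyx]

lemma reflTransGen_of_rel_swap {Q : V → V → ℝ} (hQ : ∀ x y, E x y → 0 < Q x y)
    (hdivQ : ∀ x, divergence E Q x = 0) {x y : V} (hyx : E y x) : ReflTransGen E x y := by
  classical
  simpa using mem_of_rel_of_forall_rel_mem hQ hdivQ (S := {v | ReflTransGen E x v})
    (fun u hu v huv => by simpa using (mem_filter.1 hu).2.tail huv)
    (by simp [ReflTransGen.refl]) hyx

end OrientedGraph

open OrientedGraph in
/-- a finite oriented graph is strongly connected iff its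
underlying unoriented graph is connected and it carries an everywhere positive
divergence free flow. -/
theorem stmt_4 {V : Type*} [Fintype V] (E : V → V → Prop) [DecidableRel E] :
    (∀ x y, Relation.ReflTransGen E x y) ↔
      ((∀ x y, Relation.ReflTransGen (fun a b => E a b ∨ E b a) x y) ∧
        ∃ Q : V → V → ℝ, (∀ x y, E x y → 0 < Q x y) ∧
          ∀ x, (∑ y ∈ Finset.univ.filter (fun y => E x y), Q x y) -
              (∑ y ∈ Finset.univ.filter (fun y => E y x), Q y x) = 0) := by
  constructor
  · intro hE
    exact ⟨fun x y => ReflTransGen.mono (fun a b hab => Or.inl hab) x y (hE x y),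
      exists_pos_circulation_of_forall_reflTransGen hE⟩
  · rintro ⟨hconn, Q, hQ, hdivQ⟩ x y
    refine reflTransGen_closed (fun a b hab => ?_) x y (hconn x y)
    rcases hab with hab | hba
    · exact .single hab
    · exact reflTransGen_of_rel_swap hQ hdivQ hba
end

section
/- A tournament on at least two vertices is strongly connected if and only if it contains a Hamiltonian cycle (Camion's theorem). -/
/-!
Take a longest simple cycle; one exists because strong connectivity forces a 3-cycle. If a vertex
`w` off the cycle has both an in-neighbour and an out-neighbour on it, walking along the cycle
from an in-neighbour we meet consecutive vertices `x → y` with `x → w → y`, and `w` can be spliced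
in. Otherwise every vertex off the cycle is beaten by all of it or beats all of it; strong
connectivity gives an edge `p → q` from the first kind to the second, and the cycle can be
rerouted through `p` and `q`. Either way the cycle was not longest, so a longest cycle is
Hamiltonian. Conversely, along a Hamiltonian cycle every vertex reaches every other.
-/

/-- A tournament on `V`: no loops and for each pair of distinct vertices
exactly one of the two oriented edges is present. -/
def IsTournament {V : Type*} (r : V → V → Prop) : Prop :=
  (∀ i, ¬ r i i) ∧ ∀ i j, i ≠ j → (r i j ↔ ¬ r j i)

open Relation

section

variable {α : Type*} {r : α → α → Prop}

theorem Cycle.exists_mem_of_ne_nil {s : Cycle α} (hs : s ≠ Cycle.nil) : ∃ a, a ∈ s := by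
  induction s with
  | nil => exact absurd rfl hs
  | cons a l _ => exact ⟨a, by simp⟩

theorem Cycle.exists_eq_cons_of_mem {s : Cycle α} {a : α} (ha : a ∈ s) :
    ∃ l : List α, s = ↑(a :: l) := by
  induction s using Quotient.inductionOn' with
  | h l =>
    obtain ⟨l₁, l₂, rfl⟩ := List.append_of_mem ha
    exact ⟨l₂ ++ l₁, Cycle.coe_eq_coe.2 List.isRotated_append⟩

theorem Cycle.chain_coe_iff {l : List α} (hl : l ≠ []) :
    Cycle.Chain r ↑l ↔ l.IsChain r ∧ r (l.getLast hl) (l.head hl) := by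
  rw [Cycle.chain_ne_nil r hl]
  obtain ⟨a, t, rfl⟩ := List.exists_cons_of_ne_nil hl
  rw [List.isChain_cons_cons, and_comm, List.head_cons]

theorem Cycle.Chain.reflTransGen {s : Cycle α} (hs : s.Chain r) {a b : α} (ha : a ∈ s)
    (hb : b ∈ s) : ReflTransGen r a b :=
  Cycle.chain_iff_pairwise.1 (hs.imp fun _ _ => ReflTransGen.single) a ha b hb

theorem Relation.ReflTransGen.exists_rel_of_mem_of_notMem {S : Set α} {x y : α}
    (hxy : ReflTransGen r x y) (hx : x ∈ S) (hy : y ∉ S) : ∃ a ∈ S, ∃ b ∉ S, r a b := by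
  induction hxy with
  | refl => exact absurd hx hy
  | @tail b c _ hbc ih =>
    by_cases hb : b ∈ S
    · exact ⟨b, hb, c, hy, hbc⟩
    · exact ih hb

end

namespace IsTournament

variable {V : Type*} {r : V → V → Prop}

theorem ne_of_rel (h : IsTournament r) {a b : V} (hab : r a b) : a ≠ b :=
  fun e => h.1 a (e ▸ hab)

theorem asymm (h : IsTournament r) {a b : V} (hab : r a b) : ¬ r b a :=
  (h.2 a b (h.ne_of_rel hab)).1 hab

theorem rel_of_not_rel (h : IsTournament r) {a b : V} (hne : a ≠ b) (hab : ¬ r a b) : r b a :=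
  not_not.1 fun hba => hab ((h.2 a b hne).2 hba)

theorem exists_triangle [Nontrivial V] (h : IsTournament r)
    (hsc : ∀ x y, ReflTransGen r x y) : ∃ a b c, r a b ∧ r b c ∧ r c a := by
  obtain ⟨v, w, hvw⟩ := exists_pair_ne V
  obtain ⟨u, hu, o, -, huo⟩ :=
    (hsc v w).exists_rel_of_mem_of_notMem (S := {v}) rfl hvw.symm
  have hvo : r v o := hu ▸ huo
  obtain ⟨a, hva, b, hvb, hab⟩ :=
    (hsc o v).exists_rel_of_mem_of_notMem (S := {x | r v x}) hvo (h.1 v)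
  have hbv : b ≠ v := by
    rintro rfl
    exact h.asymm hva hab
  exact ⟨v, a, b, hva, hab, h.rel_of_not_rel hbv.symm hvb⟩

/-- `v` is spliced in just before the first vertex of the path that it beats. -/
theorem exists_isChain_perm_cons (h : IsTournament r) {a v z : V} {l : List V}
    (hv : v ∉ l) (hav : r a v) (hvy : ∃ y ∈ l ++ [z], r v y) (hl : (a :: (l ++ [z])).IsChain r) :
    ∃ l', l'.Perm (v :: l) ∧ (a :: (l' ++ [z])).IsChain r := by
  induction l generalizing a with
  | nil =>
    obtain ⟨y, hy, hvy⟩ := hvy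
    obtain rfl := List.mem_singleton.1 hy
    exact ⟨[v], List.Perm.refl _, by simp [hav, hvy]⟩
  | cons c t ih =>
    obtain ⟨hac, hct⟩ := List.isChain_cons_cons.1 hl
    by_cases hvc : r v c
    · exact ⟨v :: c :: t, List.Perm.refl _,
        List.isChain_cons_cons.2 ⟨hav, List.isChain_cons_cons.2 ⟨hvc, hct⟩⟩⟩
    · have hcv : r c v := h.rel_of_not_rel (fun e => hv (by simp [e])) hvc
      have hvy' : ∃ y ∈ t ++ [z], r v y := by
        obtain ⟨y, hy, hvy⟩ := hvy
        rcases List.mem_cons.1 hy with rfl | hy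
        · exact absurd hvy hvc
        · exact ⟨y, hy, hvy⟩
      obtain ⟨l', hperm, hch⟩ := ih (fun hvt => hv (List.mem_cons_of_mem c hvt)) hcv hvy' hct
      exact ⟨c :: l', (hperm.cons c).trans (List.Perm.swap v c t),
        List.isChain_cons_cons.2 ⟨hac, hch⟩⟩

variable {s : Cycle V}

theorem exists_cycle_length_add_one (h : IsTournament r) (hnd : s.Nodup) (hs : s.Chain r)
    {v x y : V} (hv : v ∉ s) (hx : x ∈ s) (hxv : r x v) (hy : y ∈ s) (hvy : r v y) :
    ∃ s' : Cycle V, s'.Nodup ∧ s'.Chain r ∧ s'.length = s.length + 1 := by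
  obtain ⟨m, rfl⟩ := Cycle.exists_eq_cons_of_mem hx
  rw [Cycle.chain_coe_cons] at hs
  have hy' : y ∈ m ++ [x] := by
    simp only [Cycle.mem_coe_iff, List.mem_cons] at hy
    simp only [List.mem_append, List.mem_singleton]
    tauto
  obtain ⟨m', hperm, hch⟩ :=
    h.exists_isChain_perm_cons (fun hm => hv (by simp [hm])) hxv ⟨y, hy', hvy⟩ hs
  refine ⟨↑(x :: m'), ?_, (Cycle.chain_coe_cons r x m').2 hch, ?_⟩
  · rw [Cycle.nodup_coe_iff, ((hperm.cons x).trans (List.Perm.swap v x m)).nodup_iff]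
    exact List.nodup_cons.2 ⟨hv, Cycle.nodup_coe_iff.1 hnd⟩
  · simp [hperm.length_eq]

theorem exists_cycle_length_add_two (h : IsTournament r) (hnd : s.Nodup) (hs : s.Chain r)
    {c p q : V} (hc : c ∈ s) (hp : p ∉ s) (hq : q ∉ s) (hpq : r p q) (hsp : ∀ x ∈ s, r x p)
    (hqs : ∀ x ∈ s, r q x) :
    ∃ s' : Cycle V, s'.Nodup ∧ s'.Chain r ∧ s'.length = s.length + 2 := by
  obtain ⟨m, rfl⟩ := Cycle.exists_eq_cons_of_mem hc
  set l := c :: m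
  have hl : l ≠ [] := List.cons_ne_nil c m
  refine ⟨↑(p :: q :: l), ?_, ?_, by simp [l]⟩
  · simp only [Cycle.nodup_coe_iff, Cycle.mem_coe_iff] at hnd hp hq ⊢
    simp [hnd, hp, hq, h.ne_of_rel hpq]
  · obtain ⟨hch, -⟩ := (Cycle.chain_coe_iff hl).1 hs
    rw [Cycle.chain_coe_iff (List.cons_ne_nil _ _), List.getLast_cons_cons, List.getLast_cons hl]
    exact ⟨List.isChain_cons_cons.2 ⟨hpq, hch.cons_of_ne_nil hl (hqs _ (List.head_mem hl))⟩,
      hsp _ (List.getLast_mem hl)⟩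

theorem exists_longer_cycle (h : IsTournament r) (hsc : ∀ x y, ReflTransGen r x y)
    (hnd : s.Nodup) (hs : s.Chain r) {c v : V} (hc : c ∈ s) (hv : v ∉ s) :
    ∃ s' : Cycle V, s'.Nodup ∧ s'.Chain r ∧ s.length < s'.length := by
  by_cases hsplice : ∃ w ∉ s, (∃ x ∈ s, r x w) ∧ ∃ y ∈ s, r w y
  · obtain ⟨w, hw, ⟨x, hx, hxw⟩, y, hy, hwy⟩ := hsplice
    obtain ⟨s', hnd', hs', hlen⟩ := h.exists_cycle_length_add_one hnd hs hw hx hxw hy hwy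
    exact ⟨s', hnd', hs', by omega⟩
  have hdom : ∀ w ∉ s, ∀ x ∈ s, r x w → ∀ y ∈ s, r y w := fun w hw x hx hxw y hy =>
    h.rel_of_not_rel (ne_of_mem_of_not_mem hy hw).symm fun hwy =>
      hsplice ⟨w, hw, ⟨x, hx, hxw⟩, y, hy, hwy⟩
  obtain ⟨x, hx, p₀, hp₀, hxp₀⟩ :=
    (hsc c v).exists_rel_of_mem_of_notMem (S := {w | w ∈ s}) hc hv
  obtain ⟨p, hp, q, hq, hpq⟩ := (hsc p₀ c).exists_rel_of_mem_of_notMem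
    (S := {w | ∀ y ∈ s, r y w}) (hdom p₀ hp₀ x hx hxp₀) fun hcc => h.1 c (hcc c hc)
  have hps : p ∉ s := fun hp' => h.1 p (hp p hp')
  have hqs : q ∉ s := fun hq' => h.asymm (hp q hq') hpq
  have hqout : ∀ y ∈ s, r q y := fun y hy => h.rel_of_not_rel (ne_of_mem_of_not_mem hy hqs)
    fun hyq => hq (hdom q hqs y hy hyq)
  obtain ⟨s', hnd', hs', hlen⟩ := h.exists_cycle_length_add_two hnd hs hc hps hqs hpq hp hqout
  exact ⟨s', hnd', hs', by omega⟩

theorem exists_hamiltonian_cycle [Fintype V] [Nontrivial V] (h : IsTournament r)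
    (hsc : ∀ x y, ReflTransGen r x y) : ∃ s : Cycle V, s.Nodup ∧ s.Chain r ∧ ∀ v, v ∈ s := by
  classical
  set C := {s : Cycle V | s.Nodup ∧ s.Chain r ∧ s ≠ Cycle.nil}
  have hfin : C.Finite :=
    (Set.finite_coe_iff.1 (Finite.of_fintype {s : Cycle V // s.Nodup})).subset fun _ hs => hs.1
  have hne : C.Nonempty := by
    obtain ⟨a, b, c, hab, hbc, hca⟩ := h.exists_triangle hsc
    refine ⟨↑[a, b, c], ?_, by simp [hab, hbc, hca], by simp⟩
    simp [h.ne_of_rel hab, h.ne_of_rel hbc, (h.ne_of_rel hca).symm]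
  obtain ⟨s, ⟨hnd, hs, hsnil⟩, hmax⟩ := C.exists_max_image Cycle.length hfin hne
  refine ⟨s, hnd, hs, fun v => by_contra fun hv => ?_⟩
  obtain ⟨c, hc⟩ := Cycle.exists_mem_of_ne_nil hsnil
  obtain ⟨s', hnd', hs', hlt⟩ := h.exists_longer_cycle hsc hnd hs hc hv
  have hs'nil : s' ≠ Cycle.nil := by
    rintro rfl
    simp at hlt
  exact absurd (hmax s' ⟨hnd', hs', hs'nil⟩) (not_le.2 hlt)

end IsTournament

/-- Camion's theorem: a tournament on at least two vertices is
strongly connected iff it has a Hamiltonian cycle. -/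
theorem stmt_6 {V : Type*} [Fintype V] (r : V → V → Prop)
    (h : IsTournament r) (hcard : 2 ≤ Fintype.card V) :
    (∀ x y, Relation.ReflTransGen r x y) ↔
      ∃ (l : List V) (hne : l ≠ []), l.Nodup ∧ (∀ v, v ∈ l) ∧ l.Chain' r ∧
        r (l.getLast hne) (l.head hne) := by
  have : Nontrivial V := Fintype.one_lt_card_iff_nontrivial.1 hcard
  constructor
  · intro hsc
    obtain ⟨s, hnd, hs, hall⟩ := h.exists_hamiltonian_cycle hsc
    obtain ⟨l, rfl⟩ := Cycle.exists_eq_cons_of_mem (hall (Classical.arbitrary V))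
    have hl := List.cons_ne_nil (Classical.arbitrary V) l
    exact ⟨_, hl, Cycle.nodup_coe_iff.1 hnd, hall, (Cycle.chain_coe_iff hl).1 hs⟩
  · rintro ⟨l, hl, -, hall, hch, hlast⟩ x y
    exact ((Cycle.chain_coe_iff hl).2 ⟨hch, hlast⟩).reflTransGen (hall x) (hall y)
end

section
/- If γ is an antisymmetric function on pairs of distinct elements of a finite set V with at least 2 elements, γ(i,j) ≠ 0 for all i ≠ j, and Σ_{j ≠ i} γ(i,j) = 0 for every i, then the tournament on V with edge set E = {(i,j) : γ(i,j) < 0} is strongly connected. -/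
/-- the tournament associated to a nowhere vanishing antisymmetric
divergence free `γ` (edge `(i,j)` iff `γ i j < 0`) is strongly connected. -/
theorem stmt_8 {V : Type*} [Fintype V] [DecidableEq V]
    (hcard : 2 ≤ Fintype.card V) (γ : V → V → ℝ)
    (hanti : ∀ i j, γ i j = - γ j i)
    (hne : ∀ i j, i ≠ j → γ i j ≠ 0)
    (hdiv : ∀ i, ∑ j ∈ Finset.univ.erase i, γ i j = 0) :
    ∀ x y, Relation.ReflTransGen (fun i j => γ i j < 0) x y := by
  classical
  intro x y
  by_contra hy
  -- S = set of vertices reachable from x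
  set r : V → V → Prop := fun i j => γ i j < 0 with hr
  set S : Finset V := Finset.univ.filter (fun z => Relation.ReflTransGen r x z) with hS
  have hxS : x ∈ S := Finset.mem_filter.mpr ⟨Finset.mem_univ x, Relation.ReflTransGen.refl⟩
  have hyS : y ∉ S := by simp [hS, hy]
  have hdiag : ∀ i, γ i i = 0 := by
    intro i
    have := hanti i i
    linarith
  -- cross edges are positive
  have hcross : ∀ i ∈ S, ∀ j ∉ S, 0 < γ i j := by
    intro i hi j hj
    have hij : i ≠ j := by rintro rfl; exact hj hi
    have hnotlt : ¬ γ i j < 0 := by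
      intro hlt
      apply hj
      simp only [hS, Finset.mem_filter, Finset.mem_univ, true_and] at hi ⊢
      exact hi.tail hlt
    rcases lt_or_gt_of_ne (hne i j hij) with h | h
    · exact absurd h hnotlt
    · exact h
  -- inner antisymmetric sum is zero
  have hzero : ∑ i ∈ S, ∑ j ∈ S, γ i j = 0 := by
    have h1 : ∑ i ∈ S, ∑ j ∈ S, γ i j = - ∑ i ∈ S, ∑ j ∈ S, γ i j := by
      calc ∑ i ∈ S, ∑ j ∈ S, γ i j
          = ∑ i ∈ S, ∑ j ∈ S, (- γ j i) := by
            refine Finset.sum_congr rfl fun i _ => Finset.sum_congr rfl fun j _ => hanti i j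
        _ = - ∑ i ∈ S, ∑ j ∈ S, γ j i := by simp [Finset.sum_neg_distrib]
        _ = - ∑ i ∈ S, ∑ j ∈ S, γ i j := by rw [Finset.sum_comm]
    linarith
  -- total sum over S
  have htotal : ∑ i ∈ S, ∑ j ∈ Finset.univ, γ i j = 0 := by
    have : ∀ i, ∑ j ∈ Finset.univ, γ i j = 0 := by
      intro i
      have := hdiv i
      rw [← Finset.add_sum_erase _ _ (Finset.mem_univ i), this, hdiag, add_zero]
    simp [this]
  have hsplit : ∑ i ∈ S, ∑ j ∈ Finset.univ, γ i j
      = ∑ i ∈ S, ∑ j ∈ S, γ i j + ∑ i ∈ S, ∑ j ∈ Sᶜ, γ i j := by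
    rw [← Finset.sum_add_distrib]
    refine Finset.sum_congr rfl fun i _ => ?_
    rw [← Finset.sum_filter_add_sum_filter_not Finset.univ (fun j => j ∈ S)]
    congr 1 <;> [simp [Finset.filter_mem_eq_inter]; simp [Finset.compl_eq_univ_sdiff,
      Finset.sdiff_eq_filter]]
  have hpos : 0 < ∑ i ∈ S, ∑ j ∈ Sᶜ, γ i j := by
    have hyc : y ∈ Sᶜ := Finset.mem_compl.mpr hyS
    refine Finset.sum_pos' (fun i hi => Finset.sum_nonneg fun j hj =>
      le_of_lt (hcross i hi j (Finset.mem_compl.mp hj))) ⟨x, hxS, ?_⟩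
    exact Finset.sum_pos' (fun j hj => le_of_lt (hcross x hxS j (Finset.mem_compl.mp hj)))
      ⟨y, hyc, hcross x hxS y hyS⟩
  rw [hsplit, hzero, zero_add] at htotal
  linarith
end

section
/- Given a strongly connected tournament (V,E) with |V| ≥ 2, there exists an antisymmetric function γ on pairs of distinct vertices with γ(i,j) < 0 if and only if (i,j) ∈ E, and such that Σ_{j≠i} γ(i,j) = 0 for every vertex i. -/
section Aux

variable {V : Type*} [Fintype V] [DecidableEq V]

/-- Elementary antisymmetric flow along a single edge `a → b`. -/
def Eflow (a b : V) : V → V → ℝ := fun x y =>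
  (if x = a then (if y = b then (-1:ℝ) else 0) else 0) +
  (if x = b then (if y = a then (1:ℝ) else 0) else 0)

lemma Eflow_antisym (a b x y : V) : Eflow a b x y = - Eflow a b y x := by
  unfold Eflow
  rcases eq_or_ne a b with rfl | hab
  · by_cases h1 : x = a <;> by_cases h3 : y = a <;> simp [h1, h3]
  · by_cases h1 : x = a <;> by_cases h2 : x = b <;> by_cases h3 : y = a <;>
      by_cases h4 : y = b <;> simp_all

lemma Eflow_rowsum (a b : V) (hab : a ≠ b) (x : V) :
    ∑ y, Eflow a b x y = (if x = b then (1:ℝ) else 0) - (if x = a then 1 else 0) := by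
  unfold Eflow
  rw [Finset.sum_add_distrib]
  by_cases h1 : x = a <;> by_cases h2 : x = b <;>
    simp [h1, h2, Finset.sum_ite_eq'] <;> simp_all <;> ring

lemma Eflow_nonpos {r : V → V → Prop} (hT : IsTournament r) {a b x y : V}
    (hab : r a b) (hxy : r x y) : Eflow a b x y ≤ 0 := by
  have hab' : a ≠ b := fun e => hT.1 _ (e ▸ hab)
  unfold Eflow
  have h2nd : (if x = b then (if y = a then (1:ℝ) else 0) else 0) = 0 := by
    by_cases h1 : x = b
    · by_cases h2 : y = a
      · exact absurd (by rwa [h1, h2] at hxy) ((hT.2 a b hab').mp hab)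
      · simp [h1, h2]
    · simp [h1]
  rw [h2nd, add_zero]
  split_ifs <;> norm_num

lemma Eflow_self (a b : V) (hab : a ≠ b) : Eflow a b a b = -1 := by
  simp [Eflow, hab.symm, hab]

/-- Flow along a directed walk from `j` to `i`. -/
lemma walkflow {r : V → V → Prop} (hT : IsTournament r) {j i : V}
    (hwalk : Relation.ReflTransGen r j i) :
    ∃ g : V → V → ℝ, (∀ x y, g x y = - g y x) ∧ (∀ x y, r x y → g x y ≤ 0) ∧
      (∀ x, ∑ y, g x y = (if x = i then (1:ℝ) else 0) - (if x = j then 1 else 0)) := by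
  induction hwalk with
  | refl => exact ⟨0, by simp, by simp, by simp⟩
  | @tail b c hjb hbc ih =>
      obtain ⟨g, hg1, hg2, hg3⟩ := ih
      have hbc' : b ≠ c := fun e => hT.1 _ (e ▸ hbc)
      refine ⟨fun x y => g x y + Eflow b c x y, ?_, ?_, ?_⟩
      · intro x y; dsimp only; rw [hg1, Eflow_antisym]; ring
      · intro x y hxy
        have := Eflow_nonpos hT hbc hxy
        have := hg2 x y hxy
        dsimp only; linarith
      · intro x
        dsimp only
        rw [Finset.sum_add_distrib, hg3, Eflow_rowsum b c hbc']
        by_cases h1 : x = b <;> simp [h1] <;> ring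

end Aux

/-- any strongly connected tournament admits an antisymmetric
divergence free `γ` with `γ i j < 0` exactly on its edges. -/
theorem stmt_9 {V : Type*} [Fintype V] [DecidableEq V]
    (hcard : 2 ≤ Fintype.card V) (r : V → V → Prop)
    (h : IsTournament r) (hstrong : ∀ x y, Relation.ReflTransGen r x y) :
    ∃ γ : V → V → ℝ, (∀ i j, γ i j = - γ j i) ∧
      (∀ i j, γ i j < 0 ↔ r i j) ∧
      ∀ i, ∑ j ∈ Finset.univ.erase i, γ i j = 0 := by
  classical
  have key : ∀ i j : V, ∃ g : V → V → ℝ, (∀ x y, g x y = - g y x) ∧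
      (∀ x y, r x y → g x y ≤ 0) ∧ (r i j → g i j ≤ -1) ∧
      (∀ x, ∑ y, g x y = 0) := by
    intro i j
    by_cases hij : r i j
    · obtain ⟨g, hg1, hg2, hg3⟩ := walkflow h (hstrong j i)
      have hij' : i ≠ j := fun e => h.1 _ (e ▸ hij)
      refine ⟨fun x y => Eflow i j x y + g x y, ?_, ?_, ?_, ?_⟩
      · intro x y; dsimp only; rw [hg1, Eflow_antisym]; ring
      · intro x y hxy
        have := Eflow_nonpos h hij hxy
        have := hg2 x y hxy
        dsimp only; linarith
      · intro _
        have := hg2 i j hij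
        dsimp only
        rw [Eflow_self i j hij']
        linarith
      · intro x
        dsimp only
        rw [Finset.sum_add_distrib, hg3, Eflow_rowsum i j hij']
        by_cases h1 : x = i <;> by_cases h2 : x = j <;> simp [h1, h2]
    · exact ⟨0, by simp, by simp, fun hr => absurd hr hij, by simp⟩
  choose f hf1 hf2 hf3 hf4 using key
  refine ⟨fun x y => ∑ i, ∑ j, f i j x y, ?_, ?_, ?_⟩
  · intro x y
    rw [← Finset.sum_neg_distrib]
    refine Finset.sum_congr rfl fun i _ => ?_
    rw [← Finset.sum_neg_distrib]
    exact Finset.sum_congr rfl fun j _ => hf1 i j x y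
  · intro x y
    constructor
    · intro hneg
      by_contra hr
      rcases eq_or_ne x y with rfl | hxy
      · have : ∀ i j : V, f i j x x = 0 := fun i j => by
          have := hf1 i j x x; linarith
        simp [this] at hneg
      · have hyx : r y x := by
          by_contra hyx
          exact hr (((h.2 x y hxy)).mpr hyx)
        have : (0:ℝ) ≤ ∑ i, ∑ j, f i j x y := by
          apply Finset.sum_nonneg; intro i _
          apply Finset.sum_nonneg; intro j _
          have := hf2 i j y x hyx
          have := hf1 i j x y
          linarith
        linarith
    · intro hxy
      have hbound : ∑ i, ∑ j, f i j x y ≤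
          ∑ i, ∑ j, (if i = x ∧ j = y then (-1:ℝ) else 0) := by
        refine Finset.sum_le_sum fun i _ => Finset.sum_le_sum fun j _ => ?_
        by_cases hc : i = x ∧ j = y
        · obtain ⟨rfl, rfl⟩ := hc
          simpa using hf3 i j hxy
        · simp only [hc, if_neg hc]
          exact hf2 i j x y hxy
      have : ∑ i, ∑ j, (if i = x ∧ j = y then (-1:ℝ) else 0) = -1 := by
        rw [Finset.sum_eq_single x]
        · rw [Finset.sum_eq_single y] <;> simp +contextual
        · intro i _ hix
          exact Finset.sum_eq_zero fun j _ => by simp [hix]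
        · simp
      linarith
  · intro x
    have hdiag : ∀ i j : V, f i j x x = 0 := fun i j => by
      have := hf1 i j x x; linarith
    have : ∑ j ∈ Finset.univ.erase x, (∑ a, ∑ b, f a b x j)
        = ∑ j, ∑ a, ∑ b, f a b x j := by
      rw [Finset.sum_erase]
      simp [hdiag]
    rw [this, Finset.sum_comm]
    rw [Finset.sum_congr rfl fun a _ => Finset.sum_comm]
    simp [hf4]
end

section
/- Let σ: Fin N → Fin N describe the positions of N labeled particles on the cycle ℤ_N (a bijection), and consider a sequence of adjacent transpositions (exchanges of particles at sites x and x+1 mod N) taking σ back to itself. For each pair of distinct particles i, j, let N_{i,j} be the number of exchanges in the sequence in which particle i moves anticlockwise past particle j (and j moves clockwise past i), and let W(i) be the winding number of particle i (net displacement of particle i divided by N). Then N_{i,j} - N_{j,i} = W(i) - W(j). -/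
private lemma ediv_shift (N q s : ℤ) (hN : 0 < N) (hs : 0 ≤ s) (hsN : s < N) :
    (N * q + s) / N = q := by
  rw [add_comm, Int.add_mul_ediv_left _ _ (ne_of_gt hN),
    Int.ediv_eq_zero_of_lt hs hsN, zero_add]

private lemma ediv_succ_eq (N d : ℤ) (hN : 0 < N) (h : ¬ N ∣ (d + 1)) :
    (d + 1) / N = d / N := by
  have hd := Int.mul_ediv_add_emod d N
  have hr0 : 0 ≤ d % N := Int.emod_nonneg d (ne_of_gt hN)
  have hrN : d % N < N := Int.emod_lt_of_pos d hN
  have hne : d % N + 1 ≠ N := by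
    intro he
    exact h ⟨d / N + 1, by linarith⟩
  have : d + 1 = N * (d / N) + (d % N + 1) := by linarith
  rw [this, ediv_shift N _ _ hN (by linarith) (by omega)]

private lemma ediv_pred_eq (N d : ℤ) (hN : 0 < N) (h : ¬ N ∣ d) :
    (d - 1) / N = d / N := by
  have hd := Int.mul_ediv_add_emod d N
  have hr0 : 0 ≤ d % N := Int.emod_nonneg d (ne_of_gt hN)
  have hrN : d % N < N := Int.emod_lt_of_pos d hN
  have hne : d % N ≠ 0 := by
    intro he
    exact h ⟨d / N, by linarith⟩
  have : d - 1 = N * (d / N) + (d % N - 1) := by linarith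
  rw [this, ediv_shift N _ _ hN (by omega) (by linarith)]

private lemma ediv_add_two (N d : ℤ) (hN : 1 < N) (h : N ∣ (d + 1)) :
    (d + 2) / N = d / N + 1 := by
  obtain ⟨m, hm⟩ := h
  have h1 : d = N * (m - 1) + (N - 1) := by linarith [hm]; 
  have h2 : d + 2 = N * m + 1 := by linarith
  rw [h2, ediv_shift N m 1 (by linarith) (by norm_num) hN,
    h1, ediv_shift N (m - 1) (N - 1) (by linarith) (by linarith) (by linarith)]
  ring

private lemma ediv_sub_two (N d : ℤ) (hN : 1 < N) (h : N ∣ (d - 1)) :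
    (d - 2) / N = d / N - 1 := by
  obtain ⟨m, hm⟩ := h
  have h1 : d = N * m + 1 := by linarith
  have h2 : d - 2 = N * (m - 1) + (N - 1) := by linarith
  rw [h2, ediv_shift N (m - 1) (N - 1) (by linarith) (by linarith) (by linarith),
    h1, ediv_shift N m 1 (by linarith) (by norm_num) hN]

/-- winding number identity `N_{i,j} - N_{j,i} = W(i) - W(j)` for
a cyclic sequence of adjacent exchanges of `N` labeled particles on `ℤ_N`.
Positions are tracked as integer lifts `z t i`. -/
theorem stmt_10 (N T : ℕ) (hN : 0 < N)
    (z : Fin (T + 1) → Fin N → ℤ)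
    (hbij : ∀ t, Function.Bijective (fun i : Fin N => ((z t i : ℤ) : ZMod N)))
    (hstep : ∀ t : Fin T, ∃ a b : Fin N, a ≠ b ∧
      ((z t.castSucc b : ℤ) : ZMod N) = ((z t.castSucc a : ℤ) : ZMod N) + 1 ∧
      z t.succ a = z t.castSucc a + 1 ∧
      z t.succ b = z t.castSucc b - 1 ∧
      ∀ c : Fin N, c ≠ a → c ≠ b → z t.succ c = z t.castSucc c)
    (W : Fin N → ℤ)
    (hW : ∀ i, z (Fin.last T) i = z 0 i + (N : ℤ) * W i)
    (i j : Fin N) (hij : i ≠ j) :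
    ((Finset.univ.filter (fun t : Fin T =>
        z t.succ i = z t.castSucc i + 1 ∧ z t.succ j = z t.castSucc j - 1)).card : ℤ) -
      ((Finset.univ.filter (fun t : Fin T =>
        z t.succ j = z t.castSucc j + 1 ∧ z t.succ i = z t.castSucc i - 1)).card : ℤ) =
      W i - W j := by
  classical
  have hN2 : 1 < N := by
    rcases i with ⟨iv, hi⟩; rcases j with ⟨jv, hj⟩
    simp only [ne_eq, Fin.mk.injEq] at hij
    omega
  have hNZ : (N : ℤ) ≠ 0 := by exact_mod_cast hN.ne'
  have hNpos : (0 : ℤ) < N := by exact_mod_cast hN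
  have hN2Z : (1 : ℤ) < N := by exact_mod_cast hN2
  set F : Fin (T + 1) → ℤ := fun t => (z t i - z t j) / N with hF
  -- at every time, positions of i and j are distinct mod N
  have hdist : ∀ t, ¬ ((N : ℤ) ∣ (z t i - z t j)) := by
    intro t hdvd
    have h0 : ((z t i - z t j : ℤ) : ZMod N) = 0 :=
      (ZMod.intCast_zmod_eq_zero_iff_dvd _ N).mpr hdvd
    push_cast at h0
    exact hij ((hbij t).injective (by simpa [sub_eq_zero] using h0))
  -- per-step change of F equals the signed passing indicator
  have hstep' : ∀ t : Fin T, F t.succ - F t.castSucc =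
      (if (z t.succ i = z t.castSucc i + 1 ∧ z t.succ j = z t.castSucc j - 1)
        then (1 : ℤ) else 0)
      - (if (z t.succ j = z t.castSucc j + 1 ∧ z t.succ i = z t.castSucc i - 1)
        then (1 : ℤ) else 0) := by
    intro t
    obtain ⟨a, b, hab, hmod, ha, hb, hc⟩ := hstep t
    by_cases hia : i = a
    · by_cases hjb : j = b
      · -- i passes j
        subst hia; subst hjb
        have hdvd : (N : ℤ) ∣ (z t.castSucc i - z t.castSucc j + 1) := by
          apply (ZMod.intCast_zmod_eq_zero_iff_dvd _ N).mp
          push_cast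
          rw [hmod]; ring
        have h2 : z t.succ i - z t.succ j = (z t.castSucc i - z t.castSucc j) + 2 := by
          rw [ha, hb]; ring
        simp only [hF]
        rw [h2, ediv_add_two _ _ hN2Z hdvd, ha, hb]
        have hq : ¬ (z t.castSucc j - 1 = z t.castSucc j + 1) := by omega
        simp [hq]
      · -- i moves, j doesn't
        have hja : j ≠ a := fun h => hij (hia.trans h.symm)
        have hjc : z t.succ j = z t.castSucc j := hc j hja hjb
        subst hia
        have h2 : z t.succ i - z t.succ j = (z t.castSucc i - z t.castSucc j) + 1 := by
          rw [ha, hjc]; ring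
        have hnd : ¬ (N : ℤ) ∣ (z t.castSucc i - z t.castSucc j + 1) := by
          rw [← h2]; exact hdist t.succ
        simp only [hF, h2]
        rw [ediv_succ_eq _ _ hNpos hnd]
        have h3 : ¬ (z t.succ j = z t.castSucc j - 1) := by omega
        have h4 : ¬ (z t.succ j = z t.castSucc j + 1) := by omega
        simp [h3, h4]
    · by_cases hib : i = b
      · by_cases hja : j = a
        · -- j passes i
          subst hib; subst hja
          have hdvd : (N : ℤ) ∣ (z t.castSucc i - z t.castSucc j - 1) := by
            apply (ZMod.intCast_zmod_eq_zero_iff_dvd _ N).mp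
            push_cast
            rw [hmod]; ring
          have h2 : z t.succ i - z t.succ j = (z t.castSucc i - z t.castSucc j) - 2 := by
            rw [ha, hb]; ring
          simp only [hF]
          rw [h2, ediv_sub_two _ _ hN2Z hdvd, ha, hb]
          have hp : ¬ (z t.castSucc i - 1 = z t.castSucc i + 1) := by omega
          simp [hp]
        · -- i moves down, j doesn't
          have hjb : j ≠ b := fun h => hij (hib.trans h.symm)
          have hjc : z t.succ j = z t.castSucc j := hc j hja hjb
          subst hib
          have h2 : z t.succ i - z t.succ j = (z t.castSucc i - z t.castSucc j) - 1 := by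
            rw [hb, hjc]; ring
          simp only [hF, h2]
          rw [ediv_pred_eq _ _ hNpos (hdist t.castSucc)]
          have h3 : ¬ (z t.succ i = z t.castSucc i + 1) := by omega
          have h4 : ¬ (z t.succ i = z t.castSucc i - 1 ∧ z t.succ j = z t.castSucc j + 1) := by
            omega
          simp [h3, h4, hjc]
      · -- i doesn't move
        have hic : z t.succ i = z t.castSucc i := hc i hia hib
        by_cases hja : j = a
        · subst hja
          have h2 : z t.succ i - z t.succ j = (z t.castSucc i - z t.castSucc j) - 1 := by
            rw [ha, hic]; ring
          simp only [hF, h2]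
          rw [ediv_pred_eq _ _ hNpos (hdist t.castSucc)]
          have h3 : ¬ (z t.succ i = z t.castSucc i + 1) := by omega
          have h4 : ¬ (z t.succ i = z t.castSucc i - 1) := by omega
          simp [h3, h4]
        · by_cases hjb : j = b
          · subst hjb
            have h2 : z t.succ i - z t.succ j = (z t.castSucc i - z t.castSucc j) + 1 := by
              rw [hb, hic]; ring
            have hnd : ¬ (N : ℤ) ∣ (z t.castSucc i - z t.castSucc j + 1) := by
              rw [← h2]; exact hdist t.succ
            simp only [hF, h2]
            rw [ediv_succ_eq _ _ hNpos hnd]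
            have h3 : ¬ (z t.succ i = z t.castSucc i + 1) := by omega
            have h4 : ¬ (z t.succ i = z t.castSucc i - 1) := by omega
            simp [h3, h4]
          · have hjc : z t.succ j = z t.castSucc j := hc j hja hjb
            have h3 : ¬ (z t.succ i = z t.castSucc i + 1) := by omega
            have h4 : ¬ (z t.succ i = z t.castSucc i - 1) := by omega
            simp [hF, hic, hjc, h3, h4]
  -- rewrite cardinalities as sums of indicators
  have hcard : ∀ (p : Fin T → Prop) [DecidablePred p],
      ((Finset.univ.filter p).card : ℤ) = ∑ t : Fin T, if p t then (1 : ℤ) else 0 := by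
    intro p _
    rw [Finset.card_filter]
    push_cast
    rfl
  rw [hcard, hcard, ← Finset.sum_sub_distrib]
  have hsum : ∑ t : Fin T, ((if (z t.succ i = z t.castSucc i + 1 ∧
        z t.succ j = z t.castSucc j - 1) then (1 : ℤ) else 0)
      - (if (z t.succ j = z t.castSucc j + 1 ∧ z t.succ i = z t.castSucc i - 1)
        then (1 : ℤ) else 0)) = ∑ t : Fin T, (F t.succ - F t.castSucc) := by
    apply Finset.sum_congr rfl
    intro t _
    exact (hstep' t).symm
  rw [hsum]
  -- telescoping
  have htel : ∑ t : Fin T, (F t.succ - F t.castSucc) = F (Fin.last T) - F 0 := by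
    set G : ℕ → ℤ := fun n => if h : n < T + 1 then F ⟨n, h⟩ else 0 with hG
    have h1 : ∑ t : Fin T, (F t.succ - F t.castSucc)
        = ∑ k ∈ Finset.range T, (G (k + 1) - G k) := by
      rw [← Fin.sum_univ_eq_sum_range (fun k => G (k + 1) - G k) T]
      apply Finset.sum_congr rfl
      intro t _
      have ht1 : (t : ℕ) + 1 < T + 1 := by omega
      have ht2 : (t : ℕ) < T + 1 := by omega
      simp only [hG, dif_pos ht1, dif_pos ht2]
      congr 1
    rw [h1, Finset.sum_range_sub G T]
    have hT1 : T < T + 1 := by omega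
    have hT0 : 0 < T + 1 := by omega
    simp only [hG, dif_pos hT1, dif_pos hT0]
    rfl
  rw [htel]
  -- final computation using winding numbers
  have hFl : F (Fin.last T) = F 0 + (W i - W j) := by
    simp only [hF]
    rw [hW i, hW j]
    have : z 0 i + (N : ℤ) * W i - (z 0 j + (N : ℤ) * W j)
        = (z 0 i - z 0 j) + (N : ℤ) * (W i - W j) := by ring
    rw [this, Int.add_mul_ediv_left _ _ hNZ]
  rw [hFl]
  ring
end

section
/- Given any integers W(1), …, W(N) with Σ_i W(i) = 0, there exists a cyclic sequence of adjacent-transposition moves of N labeled particles on ℤ_N, starting and ending at the same configuration, such that each particle i has winding number W(i). -/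
/-!
Let particle `a` run once around the ring, exchanging `N - 1` times with the particle just ahead
of it: `a` advances by `N - 1` and every other particle falls back by one, i.e. `a` gains `N` on
top of a uniform shift by `-1`. Running `W i + m` such laps with each particle `i`, for `m` large
enough that these counts are nonnegative, makes `N m` laps in total because `∑ i, W i = 0`, so
particle `i` is displaced by `N (W i + m) - N m = N W i`.
-/

open Relation

/-- `u i` is the lifted (integer) position of particle `i`; its site is `u i mod N`. -/
def IsArrangement (N : ℕ) (u : Fin N → ℤ) : Prop :=
  Function.Bijective fun i => (u i : ZMod N)

def IsExchange (N : ℕ) (u v : Fin N → ℤ) : Prop :=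
  ∃ a b : Fin N, a ≠ b ∧ (u b : ZMod N) = u a + 1 ∧ v a = u a + 1 ∧ v b = u b - 1 ∧
    ∀ c, c ≠ a → c ≠ b → v c = u c

theorem Relation.ReflTransGen.exists_fin_path {α : Type*} {r : α → α → Prop} {a b : α}
    (h : ReflTransGen r a b) :
    ∃ (T : ℕ) (z : Fin (T + 1) → α),
      z 0 = a ∧ z (Fin.last T) = b ∧ ∀ t : Fin T, r (z t.castSucc) (z t.succ) := by
  obtain ⟨l, hchain, hlast⟩ := List.exists_isChain_cons_of_relationReflTransGen h
  refine ⟨l.length, fun t => (a :: l)[t], rfl, ?_, fun t => hchain.getElem t (by simp)⟩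
  rw [← hlast, List.getLast_eq_getElem]
  rfl

section Arrangement

variable {N : ℕ} {u v : Fin N → ℤ}

theorem isArrangement_natCast [NeZero N] : IsArrangement N fun i => ((i : ℕ) : ℤ) := by
  refine (Fintype.bijective_iff_injective_and_card _).mpr ⟨fun i j hij => ?_, by simp⟩
  simp only [Int.cast_natCast] at hij
  have hval := congrArg ZMod.val hij
  rwa [ZMod.val_cast_of_lt i.isLt, ZMod.val_cast_of_lt j.isLt, Fin.val_inj] at hval

theorem IsExchange.isArrangement (hm : IsExchange N u v) (hu : IsArrangement N u) :
    IsArrangement N v := by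
  obtain ⟨a, b, -, hsite, hva, hvb, hvc⟩ := hm
  have hswap : (fun i => (v i : ZMod N)) = (fun i => (u i : ZMod N)) ∘ Equiv.swap a b := by
    funext c
    rcases eq_or_ne c a with rfl | hca
    · simp [hva, hsite]
    rcases eq_or_ne c b with rfl | hcb
    · simp [hvb, hsite]
    · simp [hvc c hca hcb, Equiv.swap_apply_of_ne_of_ne hca hcb]
  unfold IsArrangement
  rw [hswap]
  exact hu.comp (Equiv.swap a b).bijective

theorem IsArrangement.of_reflTransGen (h : ReflTransGen (IsExchange N) u v)
    (hu : IsArrangement N u) : IsArrangement N v := by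
  induction h with
  | refl => exact hu
  | tail _ hm ih => exact hm.isArrangement ih

end Arrangement

section Lap

variable {N : ℕ} {u : Fin N → ℤ} (a : Fin N)

/-- The forward distance, in sites, from particle `a` to particle `c`. -/
def relPos (u : Fin N → ℤ) (a c : Fin N) : ℕ :=
  ((u c : ZMod N) - (u a : ZMod N)).val

theorem relPos_self : relPos u a a = 0 := by
  simp [relPos]

theorem relPos_injective [NeZero N] (hu : IsArrangement N u) : Function.Injective (relPos u a) :=
  fun _ _ h => hu.1 (sub_left_inj.mp (ZMod.val_injective N h))

theorem exists_relPos_eq (hu : IsArrangement N u) {k : ℕ} (hk : k < N) :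
    ∃ b, relPos u a b = k := by
  obtain ⟨b, hb⟩ := hu.2 (u a + k)
  exact ⟨b, by simp [relPos, hb, ZMod.val_natCast_of_lt hk]⟩

/-- The configuration after particle `a` has passed the `k` particles directly ahead of it. -/
def lapStage (u : Fin N → ℤ) (a : Fin N) (k : ℕ) : Fin N → ℤ :=
  fun c => if c = a then u a + k else if relPos u a c ≤ k then u c - 1 else u c

theorem lapStage_zero [NeZero N] (hu : IsArrangement N u) : lapStage u a 0 = u := by
  funext c
  rcases eq_or_ne c a with rfl | hca
  · simp [lapStage]
  · have hpos : relPos u a c ≠ 0 := by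
      rw [← relPos_self (u := u) a]
      exact (relPos_injective a hu).ne hca
    simp [lapStage, hca, hpos]

theorem isExchange_lapStage [NeZero N] (hu : IsArrangement N u) {k : ℕ} (hk : k + 1 < N) :
    IsExchange N (lapStage u a k) (lapStage u a (k + 1)) := by
  obtain ⟨b, hb⟩ := exists_relPos_eq a hu hk
  have hba : b ≠ a := by
    rintro rfl
    rw [relPos_self] at hb
    omega
  have hsite : (u b : ZMod N) = u a + (k + 1) := by
    have := ZMod.natCast_zmod_val ((u b : ZMod N) - (u a : ZMod N))
    rw [← relPos, hb] at this
    push_cast at this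
    linear_combination -this
  refine ⟨a, b, hba.symm, ?_, ?_, ?_, fun c hca hcb => ?_⟩
  · simp only [lapStage, hba, hb, hsite, ↓reduceIte, Nat.not_succ_le_self, Int.cast_add,
      Int.cast_natCast]
    ring
  · simp only [lapStage, ↓reduceIte, Nat.cast_add, Nat.cast_one]
    ring
  · simp [lapStage, hba, hb]
  · have hne : relPos u a c ≠ k + 1 := hb ▸ (relPos_injective a hu).ne hcb
    have hle : relPos u a c ≤ k + 1 ↔ relPos u a c ≤ k := by omega
    simp [lapStage, hca, hle]

theorem reflTransGen_lapStage [NeZero N] (hu : IsArrangement N u) :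
    ∀ k < N, ReflTransGen (IsExchange N) u (lapStage u a k)
  | 0, _ => by rw [lapStage_zero a hu]
  | k + 1, hk =>
    (reflTransGen_lapStage hu k (by omega)).tail (isExchange_lapStage a hu hk)

theorem reflTransGen_lap [NeZero N] (hu : IsArrangement N u) :
    ReflTransGen (IsExchange N) u fun c => u c + (if c = a then (N : ℤ) else 0) - 1 := by
  convert reflTransGen_lapStage a hu (N - 1) (by have := NeZero.pos N; omega) using 1
  funext c
  have hN : ((N - 1 : ℕ) : ℤ) = N - 1 := by have := NeZero.pos N; omega
  rcases eq_or_ne c a with rfl | hca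
  · simp only [lapStage, ↓reduceIte, hN]
    ring
  · have hle : relPos u a c ≤ N - 1 := Nat.le_pred_of_lt (ZMod.val_lt _)
    simp [lapStage, hca, hle]

theorem reflTransGen_laps [NeZero N] (s : Multiset (Fin N)) (hu : IsArrangement N u) :
    ReflTransGen (IsExchange N) u
      fun c => u c + N * (s.count c : ℤ) - (Multiset.card s : ℤ) := by
  induction s using Multiset.induction_on generalizing u with
  | empty => simpa using ReflTransGen.refl
  | cons a s ih =>
    have hlap := reflTransGen_lap a hu
    convert hlap.trans (ih (hu.of_reflTransGen hlap)) using 1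
    funext c
    simp only [Multiset.count_cons, Multiset.card_cons]
    split_ifs <;> push_cast <;> ring

end Lap

/-- any integer winding numbers summing to zero are realized by
some cyclic sequence of adjacent exchanges of `N` labeled particles on `ℤ_N`. -/
theorem stmt_12 (N : ℕ) (hN : 0 < N) (W : Fin N → ℤ) (hsum : ∑ i, W i = 0) :
    ∃ (T : ℕ) (z : Fin (T + 1) → Fin N → ℤ),
      (∀ i : Fin N, z 0 i = (i : ℤ)) ∧
      (∀ t, Function.Bijective (fun i : Fin N => ((z t i : ℤ) : ZMod N))) ∧
      (∀ t : Fin T, ∃ a b : Fin N, a ≠ b ∧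
        ((z t.castSucc b : ℤ) : ZMod N) = ((z t.castSucc a : ℤ) : ZMod N) + 1 ∧
        z t.succ a = z t.castSucc a + 1 ∧
        z t.succ b = z t.castSucc b - 1 ∧
        ∀ c : Fin N, c ≠ a → c ≠ b → z t.succ c = z t.castSucc c) ∧
      (∀ i, z (Fin.last T) i = z 0 i + (N : ℤ) * W i) := by
  have : NeZero N := NeZero.of_pos hN
  set m := Finset.univ.sup fun i => (W i).natAbs
  have hm : ∀ i, 0 ≤ W i + m := fun i => by
    have := Finset.le_sup (f := fun i => (W i).natAbs) (Finset.mem_univ i)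
    omega
  set s : Multiset (Fin N) := ∑ i, Multiset.replicate (W i + m).toNat i
  have hcount : ∀ c, (s.count c : ℤ) = W c + m := fun c => by
    simp [s, Multiset.count_sum', Multiset.count_replicate, hm c]
  have hcard : (Multiset.card s : ℤ) = N * m := by
    simp [s, hm, Finset.sum_add_distrib, hsum]
  obtain ⟨T, z, hz0, hzT, hmove⟩ :=
    (reflTransGen_laps s (isArrangement_natCast (N := N))).exists_fin_path
  have harr : ∀ t, IsArrangement N (z t) :=
    Fin.induction (hz0 ▸ isArrangement_natCast) fun t h => (hmove t).isArrangement h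
  refine ⟨T, z, fun i => by rw [hz0], harr, hmove, fun i => ?_⟩
  rw [hzT, hz0]
  dsimp only
  rw [hcount, hcard]
  ring
end

section
/- Let γ be an antisymmetric real function on pairs of distinct elements of {1,…,N} with zero divergence (Σ_{j≠i} γ(i,j) = 0 for all i). Then for every cyclic sequence of exchanges on the ring ℤ_N, the sum Σ_l log(r(η^{(l)}, η^{(l+1)})/r(η^{(l+1)}, η^{(l)})) with log(r/r') = γ for the exchanged particle pair (in the direction of the move) equals zero; i.e., the Kolmogorov cycle condition holds and the alphabet model with rates c satisfying log(c(i,j)/c(j,i)) = γ(i,j) is reversible. -/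
/-!
Order the sites of `ℤ_N` as `0 < 1 < ⋯ < N - 1` and put `V(η) = ∑_{a < b} γ(η a, η b)`.
Exchanging the particles `i = η x`, `j = η (x + 1)` changes `V` by
`γ(j, i) - γ(i, j) = -2 γ(i, j)`: for an interior bond only the pair `(x, x + 1)` changes
order, while across the bond `(N - 1, 0)` each of the two sites also changes order with every
other site, which adds the divergences of `γ` at `i` and `j`, both zero. Hence the cycle sum
is `(V(η⁰) - V(η^L)) / 2 = 0`.
-/

open Finset

theorem Fin.sum_castSucc_sub_succ {M : Type*} [AddCommGroup M] {n : ℕ} (f : Fin (n + 1) → M) :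
    ∑ i : Fin n, (f i.castSucc - f i.succ) = f 0 - f (Fin.last n) := by
  induction n with
  | zero => simp
  | succ n ih =>
    rw [Fin.sum_univ_castSucc]
    simp only [Fin.succ_castSucc]
    rw [ih (fun i => f i.castSucc), Fin.castSucc_zero, Fin.succ_last]
    abel

section PairPotential

variable {P K : Type*} [Fintype P]

def pairPotential (w : P → P → ℝ) (γ : K → K → ℝ) (η : P ≃ K) : ℝ :=
  ∑ a, ∑ b, w a b * γ (η a) (η b)

variable (γ : K → K → ℝ) (η : P ≃ K)

theorem pairPotential_perm_trans (w : P → P → ℝ) (σ : Equiv.Perm P) :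
    pairPotential w γ (σ.trans η) =
      pairPotential (fun a b => w (σ.symm a) (σ.symm b)) γ η :=
  Fintype.sum_equiv σ _ _ fun _ => Fintype.sum_equiv σ _ _ fun _ => by simp

theorem pairPotential_add (w w' : P → P → ℝ) :
    pairPotential (w + w') γ η = pairPotential w γ η + pairPotential w' γ η := by
  simp only [pairPotential, Pi.add_apply, add_mul, sum_add_distrib]

theorem pairPotential_sub (w w' : P → P → ℝ) :
    pairPotential (w - w') γ η = pairPotential w γ η - pairPotential w' γ η := by
  simp only [pairPotential, Pi.sub_apply, sub_mul, sum_sub_distrib]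

variable [DecidableEq P]

def pointKernel (p a b : P) : ℝ :=
  (if a = p then 1 else 0) - (if b = p then 1 else 0)

def swapKernel (p q a b : P) : ℝ :=
  (if a = q ∧ b = p then 1 else 0) - (if a = p ∧ b = q then 1 else 0)

theorem pairPotential_pointKernel [Fintype K] (p : P) :
    pairPotential (pointKernel p) γ η = ∑ k, γ (η p) k - ∑ k, γ k (η p) := by
  simp only [pairPotential, pointKernel, sub_mul, ite_mul, one_mul, zero_mul, sum_sub_distrib,
    sum_ite_irrel, Equiv.sum_comp η, sum_const_zero, sum_ite_eq', mem_univ, if_true, sub_right_inj]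
  exact η.sum_comp (γ · (η p))

theorem pairPotential_swapKernel (p q : P) :
    pairPotential (swapKernel p q) γ η = γ (η q) (η p) - γ (η p) (η q) := by
  simp only [pairPotential, swapKernel, ite_and, sub_mul, ite_mul, one_mul, zero_mul,
    sum_sub_distrib, sum_ite_irrel, sum_ite_eq', mem_univ, if_true, sum_const_zero]

end PairPotential

section CyclicOrder

variable {N : ℕ}

def ltKernel (a b : ZMod N) : ℝ := if a.val < b.val then 1 else 0

variable [NeZero N]

theorem ZMod.val_add_one_eq_mod (x : ZMod N) : (x + 1).val = (x.val + 1) % N := by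
  rw [ZMod.val_add, ZMod.val_one_eq_one_mod, Nat.add_mod_mod]

theorem ltKernel_swap_of_ne {x : ZMod N} (hx : x + 1 ≠ 0) (a b : ZMod N) :
    ltKernel (Equiv.swap x (x + 1) a) (Equiv.swap x (x + 1) b) =
      ltKernel a b + swapKernel x (x + 1) a b := by
  have hxN : x.val + 1 ≠ N := fun h =>
    hx <| (ZMod.val_eq_zero _).1 <| by rw [ZMod.val_add_one_eq_mod, h, Nat.mod_self]
  have hv : (x + 1).val = x.val + 1 := by
    rw [ZMod.val_add_one_eq_mod, Nat.mod_eq_of_lt (by have := ZMod.val_lt x; omega)]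
  have hval : ∀ a b : ZMod N, a = b ↔ a.val = b.val := fun a b =>
    (ZMod.val_injective N).eq_iff.symm
  have ha := ZMod.val_lt a
  have hb := ZMod.val_lt b
  simp only [ltKernel, swapKernel, Equiv.swap_apply_def, hval, hv]
  split_ifs <;> norm_num <;> omega

/-- Across the bond `(N - 1, 0)` both sites also change order with every other site. -/
theorem ltKernel_swap_of_eq {x : ZMod N} (hx : x + 1 = 0) (a b : ZMod N) :
    ltKernel (Equiv.swap x (x + 1) a) (Equiv.swap x (x + 1) b) =
      ltKernel a b + swapKernel x (x + 1) a b + pointKernel x a b - pointKernel (x + 1) a b := by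
  have hv : (x + 1).val = 0 := by rw [hx, ZMod.val_zero]
  have hxN : x.val + 1 = N := by
    by_contra h
    rw [ZMod.val_add_one_eq_mod, Nat.mod_eq_of_lt (by have := ZMod.val_lt x; omega)] at hv
    omega
  have hval : ∀ a b : ZMod N, a = b ↔ a.val = b.val := fun a b =>
    (ZMod.val_injective N).eq_iff.symm
  have ha := ZMod.val_lt a
  have hb := ZMod.val_lt b
  simp only [ltKernel, swapKernel, pointKernel, Equiv.swap_apply_def, hval, hv]
  split_ifs <;> norm_num <;> omega

theorem pairPotential_ltKernel_swap_trans {K : Type*} [Fintype K] {γ : K → K → ℝ}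
    (hout : ∀ i, ∑ j, γ i j = 0) (hin : ∀ i, ∑ j, γ j i = 0)
    (η : ZMod N ≃ K) (x : ZMod N) :
    pairPotential ltKernel γ ((Equiv.swap x (x + 1)).trans η) =
      pairPotential ltKernel γ η + (γ (η (x + 1)) (η x) - γ (η x) (η (x + 1))) := by
  rw [pairPotential_perm_trans, Equiv.symm_swap]
  by_cases hx : x + 1 = 0
  · rw [show (fun a b => ltKernel (Equiv.swap x (x + 1) a) (Equiv.swap x (x + 1) b)) =
        ltKernel + swapKernel x (x + 1) + pointKernel x - pointKernel (x + 1) from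
        funext₂ (ltKernel_swap_of_eq hx)]
    simp only [pairPotential_add, pairPotential_sub, pairPotential_pointKernel,
      pairPotential_swapKernel, hout, hin]
    ring
  · rw [show (fun a b => ltKernel (Equiv.swap x (x + 1) a) (Equiv.swap x (x + 1) b)) =
        ltKernel + swapKernel x (x + 1) from funext₂ (ltKernel_swap_of_ne hx),
      pairPotential_add, pairPotential_swapKernel]

end CyclicOrder

section LogRatio

variable {K : Type*} (c : K → K → ℝ)

noncomputable def logRatio (i j : K) : ℝ := Real.log (c i j / c j i)

theorem logRatio_swap (i j : K) : logRatio c j i = -logRatio c i j := by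
  rw [logRatio, ← inv_div, Real.log_inv, logRatio]

theorem logRatio_self (i : K) : logRatio c i i = 0 := by
  by_cases h : c i i = 0 <;> simp [logRatio, h]

end LogRatio

theorem stmt_13_general (N : ℕ)
    (c : Fin N → Fin N → ℝ)
    (hdiv : ∀ i, ∑ j ∈ Finset.univ.erase i, Real.log (c i j / c j i) = 0)
    (L : ℕ) (η : Fin (L + 1) → (ZMod N ≃ Fin N)) (x : Fin L → ZMod N)
    (hstep : ∀ l : Fin L,
      η l.succ = (Equiv.swap (x l) (x l + 1)).trans (η l.castSucc))
    (hcyc : η (Fin.last L) = η 0) :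
    ∑ l : Fin L,
      Real.log (c (η l.castSucc (x l)) (η l.castSucc (x l + 1)) /
        c (η l.castSucc (x l + 1)) (η l.castSucc (x l))) = 0 := by
  have : NeZero N := ⟨(η 0 0).pos.ne'⟩
  have hout (i : Fin N) : ∑ j, logRatio c i j = 0 := by
    rw [← sum_erase _ (logRatio_self c i)]
    exact hdiv i
  have hin (i : Fin N) : ∑ j, logRatio c j i = 0 := by
    rw [sum_congr rfl fun j _ => logRatio_swap c i j, sum_neg_distrib, hout, neg_zero]
  have hterm (l : Fin L) : logRatio c (η l.castSucc (x l)) (η l.castSucc (x l + 1)) =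
      (pairPotential ltKernel (logRatio c) (η l.castSucc) -
        pairPotential ltKernel (logRatio c) (η l.succ)) / 2 := by
    rw [hstep l, pairPotential_ltKernel_swap_trans hout hin, logRatio_swap]
    ring
  change ∑ l : Fin L, logRatio c (η l.castSucc (x l)) (η l.castSucc (x l + 1)) = 0
  rw [sum_congr rfl fun l _ => hterm l, ← sum_div,
    Fin.sum_castSucc_sub_succ fun k => pairPotential ltKernel (logRatio c) (η k), hcyc,
    sub_self, zero_div]

/-- if `γ(i,j) = log (c i j / c j i)` is divergence free, then
the Kolmogorov cycle condition holds along every cycle in the configuration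
space of the alphabet model on the ring `ℤ_N`, i.e. the model is reversible. -/
theorem stmt_13 (N : ℕ) (hN : 0 < N)
    (c : Fin N → Fin N → ℝ) (hc : ∀ i j, 0 < c i j)
    (hdiv : ∀ i, ∑ j ∈ Finset.univ.erase i, Real.log (c i j / c j i) = 0)
    (L : ℕ) (η : Fin (L + 1) → (ZMod N ≃ Fin N)) (x : Fin L → ZMod N)
    (hstep : ∀ l : Fin L,
      η l.succ = (Equiv.swap (x l) (x l + 1)).trans (η l.castSucc))
    (hcyc : η (Fin.last L) = η 0) :
    ∑ l : Fin L,
      Real.log (c (η l.castSucc (x l)) (η l.castSucc (x l + 1)) /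
        c (η l.castSucc (x l + 1)) (η l.castSucc (x l))) = 0 :=
  stmt_13_general N c hdiv L η x hstep hcyc
end

section
/- For the alphabet model on ℤ_N, the Kolmogorov cycle condition holds for all cycles in the configuration space if and only if div γ(i) = 0 for all i, where γ(i,j) = log(c(i,j)/c(j,i)). -/
/-!
Write `γ i j = log (c i j / c j i)`; it is antisymmetric for every `c`. On configurations
`η : ℤ_N ≃ particles` put `V η = ∑ s t, ((t - s) mod N) γ (η s) (η t)`. Exchanging the
particles `a`, `b` at sites `x`, `x + 1` changes `V` by `2N γ a b - 2 (div γ a - div γ b)`,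
so along a closed cycle `N ∑ γ a b = ∑ (div γ a - div γ b)`, and zero divergence gives the
cycle condition.
Conversely, let the particle `i` at site `p` travel around the ring by exchanging with its right
neighbour at sites `p, p + 1, …`. Every `N - 1` steps it has passed each other particle once and
the configuration is rotated by one site, so `N (N - 1)` steps form a cycle whose log-ratio sum
is `N div γ i`.
-/

open Finset Equiv

lemma Fin.sum_succ_sub_castSucc {M : Type*} [AddCommGroup M] {L : ℕ}
    (f : Fin (L + 1) → M) : ∑ l : Fin L, (f l.succ - f l.castSucc) = f (Fin.last L) - f 0 := by
  rw [sum_sub_distrib, sub_eq_sub_iff_add_eq_add, add_comm, ← Fin.sum_univ_succ,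
    Fin.sum_univ_castSucc, add_comm]

namespace ZMod

variable {N : ℕ} [NeZero N]

lemma val_sub_one_of_ne_zero {u : ZMod N} (h : u ≠ 0) : ((u - 1).val : ℤ) = u.val - 1 := by
  have hpos : 0 < u.val := Nat.pos_of_ne_zero ((ZMod.val_ne_zero u).mpr h)
  have hcast : u - 1 = ((u.val - 1 : ℕ) : ZMod N) := by
    rw [Nat.cast_sub hpos, ZMod.natCast_zmod_val, Nat.cast_one]
  rw [hcast, ZMod.val_cast_of_lt (by have := ZMod.val_lt u; omega)]
  omega

-- The particle at `x` moves one site to the right and the one at `x + 1` one site to the left;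
-- the distance from the first to the second, read rightwards around the ring, jumps between
-- `1` and `N - 1`.
lemma val_swap_sub_swap (x s t : ZMod N) :
    ((swap x (x + 1) t - swap x (x + 1) s).val : ℤ) = (t - s).val
      + (((if t = x then 1 else 0) - if t = x + 1 then 1 else 0)
        - ((if s = x then 1 else 0) - if s = x + 1 then 1 else 0))
      + N * ((if s = x ∧ t = x + 1 then 1 else 0) - if s = x + 1 ∧ t = x then 1 else 0) := by
  rcases (NeZero.one_le : 1 ≤ N).eq_or_lt with hN | hN
  · subst hN
    simp [Subsingleton.elim s x, Subsingleton.elim t x]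
  have : Fact (1 < N) := ⟨hN⟩
  have hval_neg_one : ((-1 : ZMod N).val : ℤ) = N - 1 := by
    rw [ZMod.neg_val, if_neg one_ne_zero, ZMod.val_one]; omega
  have hx : x ≠ x + 1 := by simp
  have hsub : ∀ u v : ZMod N, u ≠ v → ((u - v - 1).val : ℤ) = (u - v).val - 1 :=
    fun u v h => val_sub_one_of_ne_zero (sub_ne_zero.mpr h)
  have hsite : ∀ u : ZMod N, x = u ∨ x + 1 = u ∨ (u ≠ x ∧ u ≠ x + 1) := by tauto
  rcases hsite s with rfl | rfl | ⟨hs, hs'⟩ <;> rcases hsite t with rfl | rfl | ⟨ht, ht'⟩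
  · simp
  · simp [hx, hval_neg_one, ZMod.val_one]; ring
  · rw [swap_apply_left, swap_apply_of_ne_of_ne ht ht', sub_add_eq_sub_sub, hsub t x ht]
    simp [ht, ht', hx]
    ring
  · simp [hx, hx.symm, hval_neg_one, ZMod.val_one]; ring
  · simp
  · rw [swap_apply_right, swap_apply_of_ne_of_ne ht ht', sub_add_eq_sub_sub, hsub t x ht]
    simp [ht, ht', hx.symm]
  · rw [swap_apply_left, swap_apply_of_ne_of_ne hs hs', ← add_sub_cancel_right (x - s) 1,
      sub_add_eq_add_sub, hsub (x + 1) s (Ne.symm hs')]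
    simp [hs, hs']
  · rw [swap_apply_right, swap_apply_of_ne_of_ne hs hs', ← add_sub_cancel_right (x - s) 1,
      sub_add_eq_add_sub, hsub (x + 1) s (Ne.symm hs')]
    simp [hs, hs']
    ring
  · simp [swap_apply_of_ne_of_ne ht ht', swap_apply_of_ne_of_ne hs hs', hs, hs', ht, ht']

lemma sum_range_sub_one_eq_sum_erase {M : Type*} [AddCommGroup M] (p : ZMod N) (F : ZMod N → M) :
    ∑ m ∈ range (N - 1), F (p + m + 1) = ∑ s ∈ univ.erase p, F s := by
  have hrange : ∑ m ∈ range N, F (p + m) = ∑ s, F s := by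
    rw [← Equiv.sum_comp (Equiv.addLeft p) F]
    exact sum_nbij' Nat.cast ZMod.val (fun _ _ => mem_univ _) (fun s _ => mem_range.mpr s.val_lt)
      (fun m hm => ZMod.val_cast_of_lt (mem_range.mp hm)) (fun s _ => ZMod.natCast_zmod_val s)
      (fun _ _ => rfl)
  have hsplit := sum_range_succ' (fun m => F (p + m)) (N - 1)
  rw [Nat.sub_add_cancel NeZero.one_le, hrange] at hsplit
  rw [sum_erase_eq_sub (mem_univ p), hsplit, Nat.cast_zero, add_zero, add_sub_cancel_right]
  simp [add_assoc]

end ZMod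

namespace AlphabetModel

section Divergence

variable {N : ℕ} [NeZero N] {ι : Type*} (g : ι → ι → ℝ)

def potential (η : ZMod N ≃ ι) : ℝ := ∑ s, ∑ t, ((t - s).val : ℝ) * g (η s) (η t)

variable [Fintype ι] [DecidableEq ι]

def divergence (i : ι) : ℝ := ∑ j ∈ univ.erase i, g i j

variable {g}

lemma divergence_eq_sum (hg : ∀ i j, g j i = -g i j) (i : ι) : divergence g i = ∑ j, g i j :=
  sum_erase _ (by linarith [hg i i])

lemma potential_swap_trans (hg : ∀ i j, g j i = -g i j) (η : ZMod N ≃ ι) (x : ZMod N) :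
    potential g ((swap x (x + 1)).trans η) = potential g η + 2 * N * g (η x) (η (x + 1))
      - 2 * (divergence g (η x) - divergence g (η (x + 1))) := by
  have hreindex : potential g ((swap x (x + 1)).trans η) =
      ∑ s, ∑ t, ((swap x (x + 1) t - swap x (x + 1) s).val : ℝ) * g (η s) (η t) := by
    rw [← Equiv.sum_comp (swap x (x + 1))]
    refine sum_congr rfl fun s _ => ?_
    rw [← Equiv.sum_comp (swap x (x + 1))]
    simp [swap_apply_self]
  have hval := fun s t => congrArg (Int.cast : ℤ → ℝ) (ZMod.val_swap_sub_swap x s t)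
  push_cast at hval
  simp only [hreindex, hval, add_mul, mul_sub, sub_mul, sum_add_distrib, sum_sub_distrib, ite_mul,
    one_mul, zero_mul, sum_ite_eq', mem_univ, if_true, ite_and, mul_ite, mul_one, mul_zero,
    sum_ite_irrel, sum_const_zero]
  have hrow : ∀ i, ∑ t, g i (η t) = divergence g i := fun i => by
    rw [divergence_eq_sum hg, Equiv.sum_comp η (g i)]
  have hcol : ∀ j, ∑ s, g (η s) j = -divergence g j := fun j => by
    rw [divergence_eq_sum hg, Equiv.sum_comp η (g · j), ← sum_neg_distrib]
    exact sum_congr rfl fun i _ => hg j i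
  rw [hrow, hrow, hcol, hcol, hg (η x) (η (x + 1)), potential]
  ring

theorem natCast_mul_sum_eq_sum_divergence_sub (hg : ∀ i j, g j i = -g i j) {L : ℕ}
    (η : Fin (L + 1) → (ZMod N ≃ ι)) (x : Fin L → ZMod N)
    (hstep : ∀ l, η l.succ = (swap (x l) (x l + 1)).trans (η l.castSucc))
    (hclosed : η (Fin.last L) = η 0) :
    N * ∑ l, g (η l.castSucc (x l)) (η l.castSucc (x l + 1)) =
      ∑ l, (divergence g (η l.castSucc (x l)) - divergence g (η l.castSucc (x l + 1))) := by
  have htelescope := Fin.sum_succ_sub_castSucc (potential g ∘ η)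
  simp only [Function.comp_apply, hstep, potential_swap_trans hg, hclosed, sub_self] at htelescope
  rw [← sub_eq_zero, mul_sum, ← sum_sub_distrib]
  refine (mul_eq_zero.mp ?_).resolve_left (two_ne_zero (α := ℝ))
  rw [← htelescope, mul_sum]
  exact sum_congr rfl fun l _ => by ring

end Divergence

section Sweep

variable {N : ℕ} {ι : Type*}

def sweep (p : ZMod N) (η : ZMod N ≃ ι) : ℕ → (ZMod N ≃ ι)
  | 0 => η
  | l + 1 => (swap (p + l) (p + l + 1)).trans (sweep p η l)

lemma sweep_add (p : ZMod N) (η : ZMod N ≃ ι) (n m : ℕ) :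
    sweep p η (n + m) = sweep (p + (n : ZMod N)) (sweep p η n) m := by
  induction m with
  | zero => rfl
  | succ m ih => rw [← add_assoc, sweep, ih, sweep, Nat.cast_add, ← add_assoc p]

lemma sweep_apply_add (p : ZMod N) (η : ZMod N ≃ ι) {m t : ℕ} (hm : m < N) (ht : t < N) :
    sweep p η m (p + t) =
      if t = m then η p else if t < m then η (p + t + 1) else η (p + t) := by
  have hcast : ∀ {a b : ℕ}, a < N → b < N → (p + a = p + b ↔ a = b) := fun ha hb => by
    rw [add_right_inj, ZMod.natCast_eq_natCast_iff', Nat.mod_eq_of_lt ha, Nat.mod_eq_of_lt hb]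
  induction m generalizing t with
  | zero => by_cases ht0 : t = 0 <;> simp [sweep, ht0]
  | succ m ih =>
    rw [sweep, Equiv.trans_apply]
    by_cases htm : t = m
    · subst htm
      rw [swap_apply_left, show p + t + 1 = p + ((t + 1 : ℕ) : ZMod N) by push_cast; ring,
        ih (by omega) hm]
      simp
    by_cases htm' : t = m + 1
    · subst htm'
      rw [show p + ((m + 1 : ℕ) : ZMod N) = p + m + 1 by push_cast; ring, swap_apply_right,
        ih (by omega) (by omega)]
      simp
    rw [swap_apply_of_ne_of_ne (mt (hcast ht (by omega)).mp htm) ?_, ih (by omega) ht]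
    · simp [htm, htm', Nat.le_iff_lt_or_eq]
    · rw [show p + m + 1 = p + ((m + 1 : ℕ) : ZMod N) by push_cast; ring]
      exact mt (hcast ht hm).mp htm'

variable [NeZero N]

lemma sweep_sub_one (p : ZMod N) (η : ZMod N ≃ ι) :
    sweep p η (N - 1) = (Equiv.addRight 1).trans η := by
  ext s
  obtain ⟨t, ht, rfl⟩ : ∃ t < N, p + (t : ZMod N) = s :=
    ⟨(s - p).val, (s - p).val_lt, by rw [ZMod.natCast_zmod_val, add_sub_cancel]⟩
  rw [sweep_apply_add p η (Nat.sub_lt (NeZero.pos N) one_pos) ht]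
  rcases (Nat.le_sub_one_of_lt ht).eq_or_lt with rfl | hlt
  · simp [Nat.cast_sub (NeZero.one_le : 1 ≤ N), add_assoc]
  · simp [hlt.ne, hlt]

lemma sweep_mul_sub_one (p : ZMod N) (η : ZMod N ≃ ι) (k : ℕ) :
    sweep p η (k * (N - 1)) = (Equiv.addRight (k : ZMod N)).trans η := by
  induction k with
  | zero => ext; simp [sweep]
  | succ k ih =>
    ext s
    rw [add_one_mul, sweep_add, ih, sweep_sub_one]
    simp [add_assoc, add_comm (1 : ZMod N)]

variable [Fintype ι] [DecidableEq ι] {g : ι → ι → ℝ}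

lemma sum_range_sweep_sub_one (p : ZMod N) (η : ZMod N ≃ ι) :
    ∑ m ∈ range (N - 1), g (sweep p η m (p + m)) (sweep p η m (p + m + 1)) =
      divergence g (η p) := by
  have hterm : ∀ m ∈ range (N - 1),
      g (sweep p η m (p + m)) (sweep p η m (p + m + 1)) = g (η p) (η (p + m + 1)) := by
    intro m hm
    have hlt : m + 1 < N := by have := mem_range.mp hm; omega
    rw [sweep_apply_add p η (by omega) (by omega),
      show p + m + 1 = p + ((m + 1 : ℕ) : ZMod N) by push_cast; ring,
      sweep_apply_add p η (by omega) hlt]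
    simp
  rw [sum_congr rfl hterm, ZMod.sum_range_sub_one_eq_sum_erase p (fun s => g (η p) (η s)),
    divergence, sum_erase_eq_sub (mem_univ _), sum_erase_eq_sub (mem_univ _),
    Equiv.sum_comp η (g (η p))]

lemma sum_range_sweep_mul_sub_one (p : ZMod N) (η : ZMod N ≃ ι) (k : ℕ) :
    ∑ l ∈ range (k * (N - 1)), g (sweep p η l (p + l)) (sweep p η l (p + l + 1)) =
      k * divergence g (η p) := by
  induction k with
  | zero => simp
  | succ k ih =>
    have hwind : Equiv.addRight (k : ZMod N) (p + ((k * (N - 1) : ℕ) : ZMod N)) = p := by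
      rw [Equiv.coe_addRight, Nat.cast_mul, Nat.cast_sub NeZero.one_le, ZMod.natCast_self]; ring
    rw [add_one_mul, sum_range_add, ih]
    simp only [sweep_add, Nat.cast_add, ← add_assoc]
    rw [sum_range_sweep_sub_one, sweep_mul_sub_one, Equiv.trans_apply, hwind]
    push_cast
    ring

end Sweep

end AlphabetModel

open AlphabetModel

theorem stmt_14_general (N : ℕ) (hN : 0 < N)
    (c : Fin N → Fin N → ℝ) :
    (∀ (L : ℕ) (η : Fin (L + 1) → (ZMod N ≃ Fin N)) (x : Fin L → ZMod N),
      (∀ l : Fin L,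
        η l.succ = (Equiv.swap (x l) (x l + 1)).trans (η l.castSucc)) →
      η (Fin.last L) = η 0 →
      ∑ l : Fin L,
        Real.log (c (η l.castSucc (x l)) (η l.castSucc (x l + 1)) /
          c (η l.castSucc (x l + 1)) (η l.castSucc (x l))) = 0) ↔
    (∀ i, ∑ j ∈ Finset.univ.erase i, Real.log (c i j / c j i) = 0) := by
  have : NeZero N := ⟨hN.ne'⟩
  have hN' : (N : ℝ) ≠ 0 := Nat.cast_ne_zero.mpr hN.ne'
  have hγ : ∀ i j, Real.log (c j i / c i j) = -Real.log (c i j / c j i) := fun i j => by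
    rw [← Real.log_inv, inv_div]
  constructor
  · intro hcycle i
    set η := (ZMod.finEquiv N).toEquiv.symm
    set p := η.symm i
    have hclosed : sweep p η (N * (N - 1)) = η := by
      ext s
      simp [sweep_mul_sub_one]
    have hsum := hcycle (N * (N - 1)) (fun l => sweep p η l) (fun l => p + l) (fun _ => rfl)
      (by simpa [sweep] using hclosed)
    simp only [Fin.val_castSucc] at hsum
    rw [Fin.sum_univ_eq_sum_range (fun l => Real.log (c (sweep p η l (p + l))
      (sweep p η l (p + l + 1)) / c (sweep p η l (p + l + 1)) (sweep p η l (p + l)))),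
      sum_range_sweep_mul_sub_one (g := fun a b => Real.log (c a b / c b a)),
      Equiv.apply_symm_apply] at hsum
    exact (mul_eq_zero.mp hsum).resolve_left hN'
  · intro hdiv L η x hstep hclosed
    have hcycle := natCast_mul_sum_eq_sum_divergence_sub hγ η x hstep hclosed
    simp only [divergence, hdiv, sub_self, sum_const_zero] at hcycle
    exact (mul_eq_zero.mp hcycle).resolve_left hN'

/-- the Kolmogorov cycle condition holds for all cycles in the
configuration space of the alphabet model on `ℤ_N` iff `div γ = 0`, where
`γ(i,j) = log (c i j / c j i)`. -/
theorem stmt_14 (N : ℕ) (hN : 0 < N)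
    (c : Fin N → Fin N → ℝ) (hc : ∀ i j, 0 < c i j) :
    (∀ (L : ℕ) (η : Fin (L + 1) → (ZMod N ≃ Fin N)) (x : Fin L → ZMod N),
      (∀ l : Fin L,
        η l.succ = (Equiv.swap (x l) (x l + 1)).trans (η l.castSucc)) →
      η (Fin.last L) = η 0 →
      ∑ l : Fin L,
        Real.log (c (η l.castSucc (x l)) (η l.castSucc (x l + 1)) /
          c (η l.castSucc (x l + 1)) (η l.castSucc (x l))) = 0) ↔
    (∀ i, ∑ j ∈ Finset.univ.erase i, Real.log (c i j / c j i) = 0) :=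
  stmt_14_general N hN c
end
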